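/- arXiv:2007.05567 — 2 statements merged into one kernel-verified Lean document; each statement's English description precedes it below -/
import Mathlib

section
/- Let S = ⟨m_1,…,m_n⟩ ⊆ ℕ be a numerical semigroup minimally generated by an arithmetic sequence of relatively prime integers m_1 < ⋯ < m_n, i.e., m_i = m_1 + (i−1)e for all i ∈ {2,…,n} with gcd(m_1, e) = 1. Then L_S = { 2m_1 + λe : 2 ≤ λ ≤ 2n − 4 } + S. -/
/-!
Index the generators from `0`, so `m i = m₀ + i e`. A factorization `μ` of length `ℓ = ∑ μ i`
and index sum `T = ∑ i μ i` factors `ℓ m₀ + T e`; since `e > 0`, two factorizations of the same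
element and length have the same index sum. Vectors of length `ℓ` and index sum `T` exist when
`T ≤ (n - 1) ℓ`, and two distinct ones force `n ≥ 3`, `ℓ ≥ 2` and `2 ≤ T ≤ (n - 1) ℓ - 2`: for
`T ≤ 1` (or `n ≤ 2`) the vector is supported on `{0, 1}` and hence determined, `ℓ ≤ 1` is clear,
and reversing the indices exchanges `T` with `(n - 1) ℓ - T`. Splitting `λ = min T (2n - 4)` off
`T` and `2` off `ℓ` leaves a factorization, which gives `L_S ⊆ {2m₀ + λe} + S`. Conversely
`2m₀ + λe` has the two factorizations `u_a + u_{λ-a}` and `u_{a-1} + u_{λ-a+1}` (unit vectors)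
with `a = min λ (n - 1)`, and `L_S + S ⊆ L_S`.
-/

/-- The `S`-degree of an exponent vector. -/
def degS {n : ℕ} {G : Type*} [AddCommMonoid G] (a : Fin n → G) (lam : Fin n → ℕ) : G :=
  ∑ i, lam i • a i

/-- The set of elements of `S = ⟨a_1,…,a_n⟩` having at least two different factorizations
of the same length. -/
def LSet {n : ℕ} {G : Type*} [AddCommMonoid G] (a : Fin n → G) : Set G :=
  {x | ∃ lam nu : Fin n → ℕ, lam ≠ nu ∧ degS a lam = x ∧ degS a nu = x ∧
    ∑ i, lam i = ∑ i, nu i}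

section

variable {n : ℕ}

lemma degS_add {G : Type*} [AddCommMonoid G] (a : Fin n → G) (μ ν : Fin n → ℕ) :
    degS a (μ + ν) = degS a μ + degS a ν := by
  simp only [degS, Pi.add_apply, add_smul, Finset.sum_add_distrib]

lemma mem_closure_range_iff_exists_degS {G : Type*} [AddCommMonoid G] (a : Fin n → G) {x : G} :
    x ∈ AddSubmonoid.closure (Set.range a) ↔ ∃ μ, degS a μ = x := by
  simp only [AddSubmonoid.mem_closure_range_iff_of_fintype, degS, eq_comm]

lemma LSet.add_mem {G : Type*} [AddCommMonoid G] {a : Fin n → G} {x y : G} (hx : x ∈ LSet a)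
    (hy : y ∈ AddSubmonoid.closure (Set.range a)) : x + y ∈ LSet a := by
  obtain ⟨μ, ν, hne, rfl, hν, hlen⟩ := hx
  obtain ⟨ρ, rfl⟩ := (mem_closure_range_iff_exists_degS a).1 hy
  refine ⟨μ + ρ, ν + ρ, fun h => hne (add_right_cancel h), degS_add .., ?_, ?_⟩
  · rw [degS_add, hν]
  · simp only [Pi.add_apply, Finset.sum_add_distrib, hlen]

def indexSum (μ : Fin n → ℕ) : ℕ := ∑ i : Fin n, (i : ℕ) * μ i

lemma indexSum_add (μ ν : Fin n → ℕ) : indexSum (μ + ν) = indexSum μ + indexSum ν := by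
  simp only [indexSum, Pi.add_apply, mul_add, Finset.sum_add_distrib]

lemma indexSum_single (j : Fin n) : indexSum (Pi.single j 1) = j := by
  simp [indexSum, Pi.single_apply]

lemma indexSum_add_indexSum_comp_rev (μ : Fin n → ℕ) :
    indexSum μ + indexSum (μ ∘ Fin.rev) = (n - 1) * ∑ i, μ i := by
  have hrev : indexSum (μ ∘ Fin.rev) = ∑ i : Fin n, (i.rev : ℕ) * μ i := by
    simpa [indexSum] using Equiv.sum_comp Fin.revPerm fun i => (i.rev : ℕ) * μ i
  rw [hrev, indexSum, ← Finset.sum_add_distrib, Finset.mul_sum]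
  refine Finset.sum_congr rfl fun i _ => ?_
  rw [← add_mul, Fin.val_rev]
  congr 1
  omega

lemma degS_eq_sum_mul_add_indexSum_mul {m : Fin n → ℕ} {m₀ e : ℕ}
    (hm : ∀ i : Fin n, m i = m₀ + i * e) (μ : Fin n → ℕ) : degS m μ = (∑ i, μ i) * m₀ + indexSum μ * e := by
  simp only [degS, indexSum, hm, smul_eq_mul, Finset.sum_mul, ← Finset.sum_add_distrib]
  exact Finset.sum_congr rfl fun i _ => by ring

lemma indexSum_eq_of_degS_eq {m : Fin n → ℕ} {m₀ e : ℕ} (hm : ∀ i : Fin n, m i = m₀ + i * e)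
    (he : 0 < e) {μ ν : Fin n → ℕ} (hlen : ∑ i, μ i = ∑ i, ν i)
    (hdeg : degS m μ = degS m ν) : indexSum μ = indexSum ν := by
  rw [degS_eq_sum_mul_add_indexSum_mul hm, degS_eq_sum_mul_add_indexSum_mul hm, hlen,
    Nat.add_left_cancel_iff] at hdeg
  exact Nat.eq_of_mul_eq_mul_right he hdeg

lemma eq_zero_of_indexSum_le_one {ρ : Fin n → ℕ} (h : indexSum ρ ≤ 1) {i : Fin n}
    (hi : 2 ≤ (i : ℕ)) : ρ i = 0 := by
  have : (i : ℕ) * ρ i ≤ indexSum ρ :=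
    Finset.single_le_sum (f := fun i : Fin n => (i : ℕ) * ρ i) (by simp) (Finset.mem_univ i)
  nlinarith

lemma indexSum_eq_apply_of_support_lt_two {ρ : Fin n → ℕ}
    (hρ : ∀ i : Fin n, 2 ≤ (i : ℕ) → ρ i = 0) {j : Fin n} (hj : (j : ℕ) = 1) :
    indexSum ρ = ρ j := by
  rw [indexSum, Finset.sum_eq_single j _ (by simp), hj, one_mul]
  intro i _ hij
  rcases Nat.lt_or_ge (i : ℕ) 2 with hi | hi
  · have : (i : ℕ) = 0 := by
      by_contra; exact hij (Fin.ext (by omega))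
    rw [this, zero_mul]
  · rw [hρ i hi, mul_zero]

lemma apply_add_indexSum_of_support_lt_two {ρ : Fin n → ℕ}
    (hρ : ∀ i : Fin n, 2 ≤ (i : ℕ) → ρ i = 0) {j : Fin n} (hj : (j : ℕ) = 0) :
    ρ j + indexSum ρ = ∑ i, ρ i := by
  rw [indexSum, ← Finset.add_sum_erase _ _ (Finset.mem_univ j),
    ← Finset.add_sum_erase _ _ (Finset.mem_univ j), hj, zero_mul, zero_add]
  congr 1
  refine Finset.sum_congr rfl fun i hi => ?_
  have hij : (i : ℕ) ≠ 0 := fun h => (Finset.mem_erase.1 hi).1 (Fin.ext (by omega))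
  rcases Nat.lt_or_ge (i : ℕ) 2 with hi2 | hi2
  · rw [show (i : ℕ) = 1 by omega, one_mul]
  · rw [hρ i hi2, mul_zero]

lemma eq_of_support_lt_two {μ ν : Fin n → ℕ}
    (hμ : ∀ i : Fin n, 2 ≤ (i : ℕ) → μ i = 0) (hν : ∀ i : Fin n, 2 ≤ (i : ℕ) → ν i = 0)
    (hlen : ∑ i, μ i = ∑ i, ν i) (hidx : indexSum μ = indexSum ν) : μ = ν := by
  funext i
  obtain hi | hi | hi : (i : ℕ) = 0 ∨ (i : ℕ) = 1 ∨ 2 ≤ (i : ℕ) := by omega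
  · have := apply_add_indexSum_of_support_lt_two hμ hi
    have := apply_add_indexSum_of_support_lt_two hν hi
    omega
  · rw [← indexSum_eq_apply_of_support_lt_two hμ hi, ← indexSum_eq_apply_of_support_lt_two hν hi,
      hidx]
  · rw [hμ i hi, hν i hi]

lemma eq_single_of_sum_eq_one {ι : Type*} [Fintype ι] [DecidableEq ι] {ρ : ι → ℕ}
    (h : ∑ i, ρ i = 1) : ∃ j, ρ = Pi.single j 1 := by
  obtain ⟨j, hj⟩ := (Finsupp.sum_eq_one_iff (Finsupp.equivFunOnFinite.symm ρ)).1
    (by rwa [Finsupp.sum_fintype _ _ (by simp)])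
  exact ⟨j, by simpa [Finsupp.single_eq_pi_single] using congrArg Finsupp.equivFunOnFinite hj⟩

lemma exists_length_indexSum_eq (hn : 0 < n) (L : ℕ) {T : ℕ} (hT : T ≤ (n - 1) * L) :
    ∃ μ : Fin n → ℕ, ∑ i, μ i = L ∧ indexSum μ = T := by
  induction L generalizing T with
  | zero => exact ⟨0, by simp, by simp_all [indexSum]⟩
  | succ L ih =>
    obtain ⟨μ, hlen, hidx⟩ := ih (T := T - min T (n - 1)) (by rw [mul_add_one] at hT; omega)
    refine ⟨μ + Pi.single ⟨min T (n - 1), by omega⟩ 1, ?_, ?_⟩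
    · simp [Finset.sum_add_distrib, hlen]
    · rw [indexSum_add, indexSum_single, hidx]
      simp only
      omega

section Fiber

variable {μ ν : Fin n → ℕ} (hne : μ ≠ ν) (hlen : ∑ i, μ i = ∑ i, ν i)
  (hidx : indexSum μ = indexSum ν)
include hne hlen hidx

lemma three_le_of_ne : 3 ≤ n := by
  by_contra! hn
  have hsupp : ∀ ρ : Fin n → ℕ, ∀ i : Fin n, 2 ≤ (i : ℕ) → ρ i = 0 := fun _ i hi => by omega
  exact hne (eq_of_support_lt_two (hsupp μ) (hsupp ν) hlen hidx)

lemma two_le_length_of_ne : 2 ≤ ∑ i, μ i := by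
  by_contra! h
  obtain h0 | h1 : ∑ i, μ i = 0 ∨ ∑ i, μ i = 1 := by omega
  · refine hne (funext fun i => ?_)
    have hμi := Finset.sum_eq_zero_iff.1 h0 i (Finset.mem_univ i)
    have hνi := Finset.sum_eq_zero_iff.1 (hlen ▸ h0) i (Finset.mem_univ i)
    rw [hμi, hνi]
  · obtain ⟨j, rfl⟩ := eq_single_of_sum_eq_one h1
    obtain ⟨k, rfl⟩ := eq_single_of_sum_eq_one (hlen ▸ h1)
    rw [indexSum_single, indexSum_single] at hidx
    exact hne (by rw [Fin.ext hidx])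

lemma two_le_indexSum_of_ne : 2 ≤ indexSum μ := by
  by_contra! h
  exact hne (eq_of_support_lt_two (fun _ => eq_zero_of_indexSum_le_one (by omega))
    (fun _ => eq_zero_of_indexSum_le_one (by omega)) hlen hidx)

lemma indexSum_add_two_le_of_ne : indexSum μ + 2 ≤ (n - 1) * ∑ i, μ i := by
  have hμ := indexSum_add_indexSum_comp_rev μ
  have hν := indexSum_add_indexSum_comp_rev ν
  rw [← hlen] at hν
  have hrev : 2 ≤ indexSum (μ ∘ Fin.rev) := by
    refine two_le_indexSum_of_ne (Fin.rev_surjective.injective_comp_right.ne hne) ?_ (by omega)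
    simpa using (Equiv.sum_comp Fin.revPerm μ).trans
      (hlen.trans (Equiv.sum_comp Fin.revPerm ν).symm)
  omega

lemma exists_add_length_two_of_ne :
    ∃ lam, 2 ≤ lam ∧ lam ≤ 2 * n - 4 ∧
      ∃ ρ : Fin n → ℕ, ∑ i, μ i = ∑ i, ρ i + 2 ∧ indexSum μ = indexSum ρ + lam := by
  have hn := three_le_of_ne hne hlen hidx
  have hL := two_le_length_of_ne hne hlen hidx
  have hT := two_le_indexSum_of_ne hne hlen hidx
  have hTL := indexSum_add_two_le_of_ne hne hlen hidx
  have hsplit : (n - 1) * ∑ i, μ i = (n - 1) * (∑ i, μ i - 2) + (n - 1) * 2 := by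
    rw [← mul_add, Nat.sub_add_cancel hL]
  obtain ⟨ρ, hρL, hρT⟩ := exists_length_indexSum_eq (by omega : 0 < n) (∑ i, μ i - 2)
    (T := indexSum μ - min (indexSum μ) (2 * n - 4)) (by omega)
  exact ⟨min (indexSum μ) (2 * n - 4), by omega, by omega, ρ, by omega, by omega⟩

end Fiber

lemma exists_ne_length_two {lam : ℕ} (h2 : 2 ≤ lam) (h4 : lam ≤ 2 * n - 4) :
    ∃ μ ν : Fin n → ℕ, μ ≠ ν ∧ ∑ i, μ i = 2 ∧ ∑ i, ν i = 2 ∧ indexSum μ = lam ∧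
      indexSum ν = lam := by
  set a := min lam (n - 1)
  have hsum : ∀ j k : Fin n, ∑ i, (Pi.single j 1 + Pi.single k 1 : Fin n → ℕ) i = 2 := by
    simp [Finset.sum_add_distrib]
  refine ⟨Pi.single ⟨a, by omega⟩ 1 + Pi.single ⟨lam - a, by omega⟩ 1,
    Pi.single ⟨a - 1, by omega⟩ 1 + Pi.single ⟨lam - a + 1, by omega⟩ 1, fun h => ?_,
    hsum .., hsum .., ?_, ?_⟩
  · have := congrFun h ⟨a, by omega⟩
    simp only [Pi.add_apply, Pi.single_apply, Fin.ext_iff] at this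
    split_ifs at this <;> omega
  all_goals rw [indexSum_add, indexSum_single, indexSum_single]; simp only; omega

end

theorem LSet_arithmetic_sequence_general
    {n : ℕ} (m : Fin n → ℕ) (e : ℕ)
    (he : 0 < e)
    -- `m` is an arithmetic sequence `m_i = m_1 + (i-1) e` (0-based: `m i = m 0 + i*e`):
    (hm : ∀ i : Fin n, m i = m ⟨0, Fin.pos i⟩ + i * e)
    (h0 : 0 < n) :
    LSet m = {x | ∃ lam : ℕ, 2 ≤ lam ∧ lam ≤ 2 * n - 4 ∧
      ∃ y ∈ AddSubmonoid.closure (Set.range m), x = 2 * m ⟨0, h0⟩ + lam * e + y} := by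
  have hm₀ : ∀ i : Fin n, m i = m ⟨0, h0⟩ + i * e := hm
  ext x
  constructor
  · rintro ⟨μ, ν, hne, rfl, hν, hlen⟩
    obtain ⟨lam, h2, h4, ρ, hρL, hρT⟩ :=
      exists_add_length_two_of_ne hne hlen (indexSum_eq_of_degS_eq hm₀ he hlen hν.symm)
    refine ⟨lam, h2, h4, degS m ρ, (mem_closure_range_iff_exists_degS m).2 ⟨ρ, rfl⟩, ?_⟩
    rw [degS_eq_sum_mul_add_indexSum_mul hm₀, degS_eq_sum_mul_add_indexSum_mul hm₀, hρL, hρT]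
    ring
  · rintro ⟨lam, h2, h4, y, hy, rfl⟩
    obtain ⟨μ, ν, hne, hμL, hνL, hμT, hνT⟩ := exists_ne_length_two h2 h4
    refine LSet.add_mem ⟨μ, ν, hne, ?_, ?_, hμL.trans hνL.symm⟩ hy
    · rw [degS_eq_sum_mul_add_indexSum_mul hm₀, hμL, hμT]
    · rw [degS_eq_sum_mul_add_indexSum_mul hm₀, hνL, hνT]

/-- **Proposition.** Let `S = ⟨m_1,…,m_n⟩ ⊆ ℕ` be a numerical semigroup minimally
generated by an arithmetic sequence `m_i = m_1 + (i-1)e` of relatively prime integers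
(`gcd(m_1,e) = 1`).  Then `L_S = {2m_1 + λe : 2 ≤ λ ≤ 2n - 4} + S`. -/
theorem LSet_arithmetic_sequence
    {n : ℕ} (m : Fin n → ℕ) (e : ℕ)
    (he : 0 < e)
    -- `m` is an arithmetic sequence `m_i = m_1 + (i-1) e` (0-based: `m i = m 0 + i*e`):
    (hm : ∀ i : Fin n, m i = m ⟨0, Fin.pos i⟩ + i * e)
    (hgcd : ∀ h0 : 0 < n, Nat.gcd (m ⟨0, h0⟩) e = 1)
    -- `S` is a numerical semigroup:
    (hfin : {x : ℕ | x ∉ AddSubmonoid.closure (Set.range m)}.Finite)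
    -- `{m_1,…,m_n}` is the minimal set of generators:
    (hmin : ∀ i, m i ∉ AddSubmonoid.closure (Set.range m \ {m i}))
    (h0 : 0 < n) :
    LSet m = {x | ∃ lam : ℕ, 2 ≤ lam ∧ lam ≤ 2 * n - 4 ∧
      ∃ y ∈ AddSubmonoid.closure (Set.range m), x = 2 * m ⟨0, h0⟩ + lam * e + y} :=
  LSet_arithmetic_sequence_general m e he hm h0
end

section
/- Let S ⊆ ℤ^m ⊕ T be a finitely generated reduced monoid and let {g_1,…,g_r} be a binomial generating set of the lattice ideal I_{S̃}. Then L_S is a principal ideal of S (i.e., L_S = e + S for some e ∈ S) if and only if there exists i ∈ {1,…,r} such that deg_S(g_j) ∈ deg_S(g_i) + S for all j ∈ {1,…,r}. -/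
open MvPolynomial

/-- The lattice ideal of the monoid generated by `a`. -/
noncomputable def latticeIdeal (K : Type) [Field K] {n : ℕ} {G : Type*} [AddCommMonoid G]
    (a : Fin n → G) : Ideal (MvPolynomial (Fin n) K) :=
  Ideal.span {f | ∃ α β : Fin n →₀ ℕ, degS a ⇑α = degS a ⇑β ∧
    f = monomial α (1 : K) - monomial β 1}

/-!
A factorization pair `λ ≠ ν` of equal length and equal `S`-degree is exactly a nonzero binomial
`x^λ - x^ν` of `I_{S̃}`. Such a binomial lies in the monomial ideal generated by the
monomials `x^{gα i}, x^{gβ i}` of the generators `g_i`, so `x^λ` is divisible by one of them; since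
`deg_S(gα i) = deg_S(gβ i)`, this shows `L_S = ⋃ᵢ (deg_S(g_i) + S)`. Conversely every such
translate lies in `L_S`. A union of principal ideals is principal iff one generator divides all
the others.
-/

section Factorizations

variable {n : ℕ} {G : Type*} [AddCommMonoid G] (a : Fin n → G)

lemma degS_add_s17 (l l' : Fin n → ℕ) : degS a (l + l') = degS a l + degS a l' := by
  simp [degS, add_smul, Finset.sum_add_distrib]

lemma mem_closure_range_iff_degS {x : G} :
    x ∈ AddSubmonoid.closure (Set.range a) ↔ ∃ l, x = degS a l :=
  AddSubmonoid.mem_closure_range_iff_of_fintype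

lemma degS_mem_closure (l : Fin n → ℕ) : degS a l ∈ AddSubmonoid.closure (Set.range a) :=
  (mem_closure_range_iff_degS a).2 ⟨l, rfl⟩

lemma degS_homogenize (l : Fin n → ℕ) :
    degS (fun j => (a j, (1 : ℤ))) l = (degS a l, ((∑ i, l i : ℕ) : ℤ)) := by
  ext <;> simp [degS, Prod.fst_sum, Prod.snd_sum]

lemma degS_homogenize_eq_iff {l l' : Fin n → ℕ} :
    degS (fun j => (a j, (1 : ℤ))) l = degS (fun j => (a j, (1 : ℤ))) l' ↔
      degS a l = degS a l' ∧ ∑ i, l i = ∑ i, l' i := by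
  simp only [degS_homogenize, Prod.mk.injEq, Nat.cast_inj]

lemma add_degS_mem_LSet {x : G} (hx : x ∈ LSet a) (c : Fin n → ℕ) : x + degS a c ∈ LSet a := by
  obtain ⟨l, l', hne, rfl, hl', hlen⟩ := hx
  refine ⟨l + c, l' + c, fun h => hne (add_right_cancel h), degS_add_s17 a l c, ?_, ?_⟩
  · rw [degS_add_s17, hl']
  · simp only [Pi.add_apply, Finset.sum_add_distrib, hlen]

lemma degS_mem_LSet {l l' : Fin n → ℕ} (hne : l ≠ l')
    (h : degS (fun j => (a j, (1 : ℤ))) l = degS (fun j => (a j, (1 : ℤ))) l') :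
    degS a l ∈ LSet a :=
  have h := (degS_homogenize_eq_iff a).1 h
  ⟨l, l', hne, rfl, h.1.symm, h.2⟩

end Factorizations

lemma exists_le_of_mem_support_of_mem_span_binomials {σ R ι : Type*} [CommRing R]
    (gα gβ : ι → σ →₀ ℕ) {f : MvPolynomial σ R}
    (hf : f ∈ Ideal.span (Set.range fun i => monomial (gα i) (1 : R) - monomial (gβ i) 1))
    {c : σ →₀ ℕ} (hc : c ∈ f.support) : ∃ i, gα i ≤ c ∨ gβ i ≤ c := by
  have hspan : Ideal.span (Set.range fun i => monomial (gα i) (1 : R) - monomial (gβ i) 1) ≤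
      Ideal.span ((fun s => monomial s (1 : R)) '' (Set.range gα ∪ Set.range gβ)) := by
    refine Ideal.span_le.2 ?_
    rintro _ ⟨i, rfl⟩
    exact sub_mem (Ideal.subset_span ⟨gα i, .inl ⟨i, rfl⟩, rfl⟩)
      (Ideal.subset_span ⟨gβ i, .inr ⟨i, rfl⟩, rfl⟩)
  obtain ⟨s, hs | hs, hsc⟩ := mem_ideal_span_monomial_image.1 (hspan hf) c hc
  all_goals obtain ⟨i, rfl⟩ := hs
  exacts [⟨i, .inl hsc⟩, ⟨i, .inr hsc⟩]

lemma mem_LSet_iff_of_span_eq_latticeIdeal {n r : ℕ} {G : Type*} [AddCommMonoid G]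
    (K : Type) [Field K] (a : Fin n → G) (gα gβ : Fin r → (Fin n →₀ ℕ))
    (hne : ∀ i, gα i ≠ gβ i)
    (hhom : ∀ i, degS (fun j => (a j, (1 : ℤ))) ⇑(gα i) =
      degS (fun j => (a j, (1 : ℤ))) ⇑(gβ i))
    (hgen : Ideal.span (Set.range fun i => monomial (gα i) (1 : K) - monomial (gβ i) 1) =
      latticeIdeal K (fun j => (a j, (1 : ℤ)))) (x : G) :
    x ∈ LSet a ↔ ∃ i, ∃ y ∈ AddSubmonoid.closure (Set.range a), x = degS a ⇑(gα i) + y := by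
  constructor
  · rintro ⟨l, l', hll', rfl, hl', hlen⟩
    let α := Finsupp.equivFunOnFinite.symm l
    let β := Finsupp.equivFunOnFinite.symm l'
    have hαβ : α ≠ β := fun h => hll' (congrArg DFunLike.coe h)
    have hbinom : monomial α (1 : K) - monomial β 1 ∈
        Ideal.span (Set.range fun i => monomial (gα i) (1 : K) - monomial (gβ i) 1) := by
      rw [hgen]
      exact Ideal.subset_span ⟨α, β, (degS_homogenize_eq_iff a).2 ⟨hl'.symm, hlen⟩, rfl⟩
    have hα : α ∈ (monomial α (1 : K) - monomial β 1).support := by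
      simp [mem_support_iff, coeff_monomial, hαβ.symm]
    obtain ⟨i, hle⟩ := exists_le_of_mem_support_of_mem_span_binomials gα gβ hbinom hα
    have hdeg : degS a ⇑(gα i) = degS a ⇑(gβ i) := ((degS_homogenize_eq_iff a).1 (hhom i)).1
    obtain ⟨g, hg, hgi⟩ : ∃ g : Fin n →₀ ℕ, g ≤ α ∧ degS a ⇑g = degS a ⇑(gα i) :=
      hle.elim (fun h => ⟨_, h, rfl⟩) (fun h => ⟨_, h, hdeg.symm⟩)
    refine ⟨i, degS a ⇑(α - g), degS_mem_closure a _, ?_⟩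
    rw [← hgi, ← degS_add_s17, ← Finsupp.coe_add, add_tsub_cancel_of_le hg]
    rfl
  · rintro ⟨i, y, hy, rfl⟩
    obtain ⟨c, rfl⟩ := (mem_closure_range_iff_degS a).1 hy
    have hgi : degS a ⇑(gα i) ∈ LSet a :=
      degS_mem_LSet a (fun h => hne i (DFunLike.coe_injective h)) (hhom i)
    exact add_degS_mem_LSet a hgi c

lemma exists_eq_principal_iff_of_mem_iff {ι G : Type*} [AddCommMonoid G] (S : AddSubmonoid G)
    (d : ι → G) (hd : ∀ i, d i ∈ S) (L : Set G) (hL : ∀ x, x ∈ L ↔ ∃ i, ∃ y ∈ S, x = d i + y) :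
    (∃ e ∈ S, L = {x | ∃ y ∈ S, x = e + y}) ↔ ∃ i, ∀ j, ∃ y ∈ S, d j = d i + y := by
  constructor
  · rintro ⟨e, -, rfl⟩
    obtain ⟨i, s, hs, he⟩ := (hL e).1 ⟨0, S.zero_mem, (add_zero e).symm⟩
    refine ⟨i, fun j => ?_⟩
    obtain ⟨y, hy, hj⟩ := (hL (d j)).2 ⟨j, 0, S.zero_mem, (add_zero _).symm⟩
    exact ⟨s + y, S.add_mem hs hy, by rw [hj, he, add_assoc]⟩
  · rintro ⟨i, hi⟩
    refine ⟨d i, hd i, Set.ext fun x => ⟨fun hx => ?_, fun ⟨y, hy, hx⟩ => (hL x).2 ⟨i, y, hy, hx⟩⟩⟩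
    obtain ⟨j, y, hy, rfl⟩ := (hL x).1 hx
    obtain ⟨z, hz, hji⟩ := hi j
    exact ⟨z + y, S.add_mem hz hy, by rw [hji, add_assoc]⟩

theorem LSet_principal_iff_general
    {m n r : ℕ} {T : Type} [AddCommGroup T]
    (K : Type) [Field K]
    (a : Fin n → (Fin m → ℤ) × T)
    (gα gβ : Fin r → (Fin n →₀ ℕ))
    -- `g_i = x^{gα i} - x^{gβ i}` is a (nonzero) binomial of `I_{S̃}`:
    (hne : ∀ i, gα i ≠ gβ i)
    (hhom : ∀ i, degS (fun j => ((a j, (1 : ℤ)) : ((Fin m → ℤ) × T) × ℤ)) ⇑(gα i) =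
                 degS (fun j => ((a j, (1 : ℤ)) : ((Fin m → ℤ) × T) × ℤ)) ⇑(gβ i))
    -- `{g_1,…,g_r}` generates `I_{S̃}`:
    (hgen : Ideal.span (Set.range fun i => monomial (gα i) (1 : K) - monomial (gβ i) 1) =
      latticeIdeal K (fun j => ((a j, (1 : ℤ)) : ((Fin m → ℤ) × T) × ℤ))) :
    ((∃ e ∈ AddSubmonoid.closure (Set.range a),
        LSet a = {x | ∃ y ∈ AddSubmonoid.closure (Set.range a), x = e + y}) ↔
      (∃ i : Fin r, ∀ j : Fin r, ∃ y ∈ AddSubmonoid.closure (Set.range a),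
        degS a ⇑(gα j) = degS a ⇑(gα i) + y)) :=
  exists_eq_principal_iff_of_mem_iff _ (fun i => degS a ⇑(gα i)) (fun _ => degS_mem_closure a _)
    (LSet a) (mem_LSet_iff_of_span_eq_latticeIdeal K a gα gβ hne hhom hgen)

/-- **Proposition.** Let `S ⊆ ℤ^m ⊕ T` be a finitely generated reduced monoid and
`{g_1,…,g_r}` a binomial generating set of `I_{S̃}`.  Then `L_S` is a principal ideal
of `S` (i.e. `L_S = e + S` for some `e ∈ S`) iff there is an `i` such that
`deg_S(g_j) ∈ deg_S(g_i) + S` for all `j`. -/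
theorem LSet_principal_iff
    {m n r : ℕ} {T : Type} [AddCommGroup T] [Fintype T]
    (K : Type) [Field K]
    (a : Fin n → (Fin m → ℤ) × T)
    -- `S` is reduced:
    (hred : ∀ x, x ∈ AddSubmonoid.closure (Set.range a) →
      -x ∈ AddSubmonoid.closure (Set.range a) → x = 0)
    -- `a` is the minimal set of generators:
    (hmin : ∀ i, a i ∉ AddSubmonoid.closure (Set.range a \ {a i}))
    (gα gβ : Fin r → (Fin n →₀ ℕ))
    -- `g_i = x^{gα i} - x^{gβ i}` is a (nonzero) binomial of `I_{S̃}`: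
    (hne : ∀ i, gα i ≠ gβ i)
    (hhom : ∀ i, degS (fun j => ((a j, (1 : ℤ)) : ((Fin m → ℤ) × T) × ℤ)) ⇑(gα i) =
                 degS (fun j => ((a j, (1 : ℤ)) : ((Fin m → ℤ) × T) × ℤ)) ⇑(gβ i))
    -- `{g_1,…,g_r}` generates `I_{S̃}`:
    (hgen : Ideal.span (Set.range fun i => monomial (gα i) (1 : K) - monomial (gβ i) 1) =
      latticeIdeal K (fun j => ((a j, (1 : ℤ)) : ((Fin m → ℤ) × T) × ℤ))) :
    ((∃ e ∈ AddSubmonoid.closure (Set.range a),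
        LSet a = {x | ∃ y ∈ AddSubmonoid.closure (Set.range a), x = e + y}) ↔
      (∃ i : Fin r, ∀ j : Fin r, ∃ y ∈ AddSubmonoid.closure (Set.range a),
        degS a ⇑(gα j) = degS a ⇑(gα i) + y)) :=
  LSet_principal_iff_general K a gα gβ hne hhom hgen
end
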